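/- arXiv:2601.13165 — 2 statements merged into one kernel-verified Lean document; each statement's English description precedes it below -/
import Mathlib

section
/- Let v_{k-1}, v_k, v_{k+1} have strictly increasing x-coordinates with v_k strictly above the segment v_{k-1}v_{k+1} (a left-turning vertex when traversed right-to-left, i.e., the polyline is locally concave from above). Let w be a point whose x-coordinate is outside the interval [x_{k-1}, x_{k+1}] and which sees both segments v_{k-1}v_k and v_kv_{k+1} from above. If v_k is replaced by any point v_k' with the same x-coordinate lying between v_k and the segment v_{k-1}v_{k+1}, then w still sees both segments v_{k-1}v_k' and v_k'v_{k+1}. -/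
/-- The `y`-value at abscissa `x` of the line through points `a` and `b`. -/
noncomputable def lineY (a b : ℝ × ℝ) (x : ℝ) : ℝ :=
  a.2 + (b.2 - a.2) / (b.1 - a.1) * (x - a.1)

/-- `w` sees the segment `ab` from above: for every point `p` of `ab`,
the segment `wp` lies on or above the line through `a` and `b`. -/
def SeesAbove (w a b : ℝ × ℝ) : Prop :=
  ∀ p ∈ segment ℝ a b, ∀ q ∈ segment ℝ w p, lineY a b q.1 ≤ q.2

lemma lineY_le_iff (a b : ℝ × ℝ) (h : a.1 < b.1) (x y : ℝ) :
    lineY a b x ≤ y ↔ (b.2 - a.2) * (x - a.1) ≤ (y - a.2) * (b.1 - a.1) := by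
  unfold lineY
  rw [div_mul_eq_mul_div, ← le_sub_iff_add_le', div_le_iff₀ (by linarith)]

lemma seesAbove_of (w a b : ℝ × ℝ) (hab : a.1 ≠ b.1) (h : lineY a b w.1 ≤ w.2) :
    SeesAbove w a b := by
  intro p hp q hq
  obtain ⟨u, v, hu, hv, huv, rfl⟩ := hp
  obtain ⟨s, t, hs, ht, hst, rfl⟩ := hq
  have hab' : b.1 - a.1 ≠ 0 := sub_ne_zero.2 (Ne.symm hab)
  set m : ℝ := (b.2 - a.2) / (b.1 - a.1) with hm_def
  have hm : m * (b.1 - a.1) = b.2 - a.2 := div_mul_cancel₀ _ hab'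
  simp only [lineY, ← hm_def, Prod.smul_fst, Prod.smul_snd, Prod.fst_add, Prod.snd_add,
    smul_eq_mul]
  have h' : a.2 + m * (w.1 - a.1) ≤ w.2 := h
  have key : u * a.2 + v * b.2 - (a.2 + m * ((u * a.1 + v * b.1) - a.1)) = 0 := by
    linear_combination (a.2 - m * a.1) * huv - v * hm
  have hw0 : 0 ≤ s * (w.2 - (a.2 + m * (w.1 - a.1))) :=
    mul_nonneg hs (by linarith)
  have h2 : t * (u * a.2 + v * b.2 - (a.2 + m * ((u * a.1 + v * b.1) - a.1))) = 0 := by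
    rw [key, mul_zero]
  have h3 : (s + t) * (a.2 - m * a.1) = a.2 - m * a.1 := by rw [hst, one_mul]
  nlinarith [hw0, h2, h3]

/-- Lowering the middle vertex of a locally concave-from-above triple towards the
chord preserves visibility from a watchtower whose `x`-coordinate is outside the
interval spanned by the triple. -/
theorem stmt2 (a vk vk' c w : ℝ × ℝ)
    (h1 : a.1 < vk.1) (h2 : vk.1 < c.1)
    (habove : lineY a c vk.1 < vk.2)
    (hwx : w.1 < a.1 ∨ c.1 < w.1)
    (hsee1 : SeesAbove w a vk) (hsee2 : SeesAbove w vk c)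
    (hx : vk'.1 = vk.1)
    (hlow : vk'.2 ≤ vk.2) (hhigh : lineY a c vk.1 ≤ vk'.2) :
    SeesAbove w a vk' ∧ SeesAbove w vk' c := by
  have hac : a.1 < c.1 := h1.trans h2
  have hd1 : (0:ℝ) < vk.1 - a.1 := by linarith
  have hd2 : (0:ℝ) < c.1 - vk.1 := by linarith
  have hd3 : (0:ℝ) < c.1 - a.1 := by linarith
  have hw1 : lineY a vk w.1 ≤ w.2 :=
    hsee1 a (left_mem_segment ℝ a vk) w (left_mem_segment ℝ w a)
  have hw2 : lineY vk c w.1 ≤ w.2 :=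
    hsee2 vk (left_mem_segment ℝ vk c) w (left_mem_segment ℝ w vk)
  rw [lineY_le_iff a vk h1] at hw1
  rw [lineY_le_iff vk c h2] at hw2
  have habove' : (c.2 - a.2) * (vk.1 - a.1) ≤ (vk.2 - a.2) * (c.1 - a.1) :=
    (lineY_le_iff a c hac vk.1 vk.2).1 habove.le
  have hhigh' : (c.2 - a.2) * (vk.1 - a.1) ≤ (vk'.2 - a.2) * (c.1 - a.1) :=
    (lineY_le_iff a c hac vk.1 vk'.2).1 hhigh
  -- the chord line itself is below w:
  have hchord : (c.2 - a.2) * (w.1 - a.1) ≤ (w.2 - a.2) * (c.1 - a.1) := by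
    rcases hwx with hw | hw
    · have hcw : (0:ℝ) < c.1 - w.1 := by linarith
      nlinarith [mul_nonneg (sub_nonneg.2 hw2) hd3.le,
        mul_nonneg (sub_nonneg.2 habove') hcw.le, hd2]
    · have hwa : (0:ℝ) < w.1 - a.1 := by linarith
      nlinarith [mul_nonneg (sub_nonneg.2 hw1) hd3.le,
        mul_nonneg (sub_nonneg.2 habove') hwa.le, hd1]
  have ha' : a.1 < vk'.1 := hx ▸ h1
  have hc' : vk'.1 < c.1 := hx ▸ h2
  constructor
  · refine seesAbove_of w a vk' (ne_of_lt ha') ?_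
    rw [lineY_le_iff a vk' ha', hx]
    rcases hwx with hw | hw
    · -- pivot at a; worst case is the chord
      nlinarith [mul_nonneg (sub_nonneg.2 hchord) hd1.le,
        mul_nonneg (sub_nonneg.2 hhigh') (by linarith : (0:ℝ) ≤ a.1 - w.1), hd3]
    · nlinarith [mul_nonneg (sub_nonneg.2 hlow) (by linarith : (0:ℝ) ≤ w.1 - a.1), hw1]
  · refine seesAbove_of w vk' c (ne_of_lt hc') ?_
    rw [lineY_le_iff vk' c hc', hx]
    rcases hwx with hw | hw
    · nlinarith [mul_nonneg (sub_nonneg.2 hlow) (by linarith : (0:ℝ) ≤ c.1 - w.1), hw2]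
    · nlinarith [mul_nonneg (sub_nonneg.2 hchord) hd2.le,
        mul_nonneg (sub_nonneg.2 hhigh') (by linarith : (0:ℝ) ≤ w.1 - c.1), hd3]
end

section
/- Let T be an x-monotone terrain in R^2 given by a piecewise-linear function f, and let u = v_i be a vertex of T. If the vertical segment from u up to a point w is a watchtower (w sees all of T), then for the terrain T' obtained by raising v_i to the top t_i of its interval (same x-coordinate, larger y-coordinate, with all other vertices unchanged, and w above t_i), the vertical segment from t_i to w is a watchtower for T': w sees all of T'. In particular the watchtower height does not increase. -/
open Set

lemma lineY_left (a b : ℝ × ℝ) : lineY a b a.1 = a.2 := by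
  simp [lineY]

lemma lineY_right {a b : ℝ × ℝ} (h : a.1 ≠ b.1) : lineY a b b.1 = b.2 := by
  have hd : b.1 - a.1 ≠ 0 := sub_ne_zero.mpr h.symm
  simp only [lineY]
  field_simp
  ring

lemma lineY_le_lineY_of_mem_Icc {a b c d : ℝ × ℝ} {s u x : ℝ} (hx : x ∈ Icc s u)
    (hs : lineY a b s ≤ lineY c d s) (hu : lineY a b u ≤ lineY c d u) :
    lineY a b x ≤ lineY c d x := by
  simp only [lineY] at *
  generalize (b.2 - a.2) / (b.1 - a.1) = m at *
  generalize (d.2 - c.2) / (d.1 - c.1) = m' at *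
  rcases le_total m m' with h | h
  · nlinarith [mul_nonneg (sub_nonneg.mpr h) (sub_nonneg.mpr hx.1)]
  · nlinarith [mul_nonneg (sub_nonneg.mpr h) (sub_nonneg.mpr hx.2)]

lemma lineY_le_lineY_of_mem_uIcc {a b c d : ℝ × ℝ} {s u x : ℝ} (hx : x ∈ uIcc s u)
    (hs : lineY a b s ≤ lineY c d s) (hu : lineY a b u ≤ lineY c d u) :
    lineY a b x ≤ lineY c d x := by
  rcases mem_uIcc.mp hx with hx | hx
  · exact lineY_le_lineY_of_mem_Icc hx hs hu
  · exact lineY_le_lineY_of_mem_Icc hx hu hs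

lemma segment_eq_image_lineY {w p : ℝ × ℝ} (h : w.1 ≠ p.1) :
    segment ℝ w p = (fun x => (x, lineY w p x)) '' uIcc w.1 p.1 := by
  have hd : p.1 - w.1 ≠ 0 := sub_ne_zero.mpr h.symm
  rw [← segment_eq_uIcc, segment_eq_image, segment_eq_image, image_image]
  refine image_congr fun θ _ => Prod.ext (by simp) ?_
  simp only [lineY, smul_eq_mul, Prod.snd_add, Prod.smul_snd]
  field_simp
  ring

lemma exists_mem_Icc_succ {α : Type*} [LinearOrder α] (a : ℕ → α) {n : ℕ} (hn : 2 ≤ n) {x : α}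
    (hx : x ∈ Icc (a 0) (a (n - 1))) : ∃ k, k + 1 < n ∧ x ∈ Icc (a k) (a (k + 1)) := by
  classical
  set k := Nat.findGreatest (fun j => a j ≤ x) (n - 2)
  have hk : a k ≤ x := Nat.findGreatest_spec (P := fun j => a j ≤ x) (Nat.zero_le _) hx.1
  have hle : k ≤ n - 2 := Nat.findGreatest_le _
  refine ⟨k, by omega, hk, ?_⟩
  rcases hle.eq_or_lt with he | hlt
  · rw [show k + 1 = n - 1 by omega]
    exact hx.2
  · exact (not_le.mp (Nat.findGreatest_is_greatest (P := fun j => a j ≤ x)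
      (by omega : k < k + 1) (by omega))).le

structure IsTerrain (n : ℕ) (v : ℕ → ℝ × ℝ) (f : ℝ → ℝ) : Prop where
  fst_lt_fst : ∀ k, k + 1 < n → (v k).1 < (v (k + 1)).1
  eq_lineY : ∀ k, k + 1 < n → ∀ x ∈ Icc (v k).1 (v (k + 1)).1, f x = lineY (v k) (v (k + 1)) x

namespace IsTerrain

variable {n : ℕ} {v : ℕ → ℝ × ℝ} {f : ℝ → ℝ}

lemma fst_mem_Icc (hT : IsTerrain n v f) {j : ℕ} (hj : j < n) :
    (v j).1 ∈ Icc (v 0).1 (v (n - 1)).1 := by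
  have hmono : MonotoneOn (fun k => (v k).1) (Iic (n - 1)) :=
    (strictMonoOn_Iic_of_lt_succ fun m hm => hT.fst_lt_fst m (by omega)).monotoneOn
  exact ⟨hmono (by simp) (by simp; omega) (Nat.zero_le j),
    hmono (by simp; omega) (by simp) (by omega)⟩

lemma apply_fst (hT : IsTerrain n v f) (hn : 2 ≤ n) {j : ℕ} (hj : j < n) :
    f (v j).1 = (v j).2 := by
  by_cases h : j + 1 < n
  · rw [hT.eq_lineY j h _ ⟨le_rfl, (hT.fst_lt_fst j h).le⟩, lineY_left]
  · obtain ⟨m, rfl⟩ : ∃ m, j = m + 1 := ⟨j - 1, by omega⟩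
    rw [hT.eq_lineY m hj _ ⟨(hT.fst_lt_fst m hj).le, le_rfl⟩,
      lineY_right (hT.fst_lt_fst m hj).ne]

lemma le_of_snd_le {v' : ℕ → ℝ × ℝ} {f' : ℝ → ℝ} (hT : IsTerrain n v f)
    (hT' : IsTerrain n v' f') (hn : 2 ≤ n) (hfst : ∀ k, (v' k).1 = (v k).1)
    (hsnd : ∀ k, (v k).2 ≤ (v' k).2) {x : ℝ} (hx : x ∈ Icc (v 0).1 (v (n - 1)).1) :
    f x ≤ f' x := by
  obtain ⟨k, hk, hxk⟩ := exists_mem_Icc_succ (fun k => (v k).1) hn hx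
  rw [hT.eq_lineY k hk x hxk, hT'.eq_lineY k hk x (by rwa [hfst, hfst])]
  refine lineY_le_lineY_of_mem_Icc hxk ?_ ?_
  · rw [lineY_left, ← hfst, lineY_left]
    exact hsnd k
  · rw [lineY_right (hT.fst_lt_fst k hk).ne, ← hfst, lineY_right (hT'.fst_lt_fst k hk).ne]
    exact hsnd (k + 1)

lemma le_lineY_of_le_at_breakpoints (hT : IsTerrain n v f) (hn : 2 ≤ n) {a b : ℝ × ℝ} {s u : ℝ}
    (hs : s ∈ Icc (v 0).1 (v (n - 1)).1) (hu : u ∈ Icc (v 0).1 (v (n - 1)).1)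
    (hbreak : ∀ e ∈ uIcc s u, (e = s ∨ e = u ∨ ∃ j < n, (v j).1 = e) → f e ≤ lineY a b e)
    {x : ℝ} (hx : x ∈ uIcc s u) : f x ≤ lineY a b x := by
  wlog hsu : s ≤ u generalizing s u
  · rw [uIcc_comm] at hbreak hx
    exact this hu hs (fun e he hcases => hbreak e he (or_left_comm.mp hcases)) hx (le_of_not_ge hsu)
  rw [uIcc_of_le hsu] at hbreak hx
  obtain ⟨k, hk, hxk⟩ :=
    exists_mem_Icc_succ (fun k => (v k).1) hn ⟨hs.1.trans hx.1, hx.2.trans hu.2⟩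
  have hedge : ∀ e ∈ Icc (v k).1 (v (k + 1)).1, e ∈ Icc s u →
      (e = s ∨ e = u ∨ e = (v k).1 ∨ e = (v (k + 1)).1) →
      lineY (v k) (v (k + 1)) e ≤ lineY a b e := by
    rintro e he hesu (rfl | rfl | rfl | rfl)
    all_goals rw [← hT.eq_lineY k hk _ he]
    · exact hbreak _ hesu (Or.inl rfl)
    · exact hbreak _ hesu (Or.inr (Or.inl rfl))
    · exact hbreak _ hesu (Or.inr (Or.inr ⟨k, by omega, rfl⟩))
    · exact hbreak _ hesu (Or.inr (Or.inr ⟨k + 1, hk, rfl⟩))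
  have hlo : max (v k).1 s ≤ x := max_le hxk.1 hx.1
  have hhi : x ≤ min (v (k + 1)).1 u := le_min hxk.2 hx.2
  rw [hT.eq_lineY k hk x hxk]
  refine lineY_le_lineY_of_mem_Icc ⟨hlo, hhi⟩ ?_ ?_
  · refine hedge _ ⟨le_max_left _ _, hlo.trans hxk.2⟩ ⟨le_max_right _ _, hlo.trans hx.2⟩ ?_
    rcases max_choice (v k).1 s with h | h <;> simp [h]
  · refine hedge _ ⟨hxk.1.trans hhi, min_le_left _ _⟩ ⟨hx.1.trans hhi, min_le_right _ _⟩ ?_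
    rcases min_choice (v (k + 1)).1 u with h | h <;> simp [h]

end IsTerrain

lemma le_lineY_of_sees {f : ℝ → ℝ} {D : Set ℝ} {w p : ℝ × ℝ}
    (hsee : ∀ q : ℝ × ℝ, q.1 ∈ D → q.2 = f q.1 → ∀ r ∈ segment ℝ w q, f r.1 ≤ r.2)
    (hp : p.1 ∈ D) (hpf : f p.1 ≤ p.2) (h : w.1 ≠ p.1) {x : ℝ} (hx : x ∈ uIcc w.1 p.1) :
    f x ≤ lineY w p x := by
  -- compare with the segment from `w` to the point of the graph below `p`
  set q : ℝ × ℝ := (p.1, f p.1)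
  have hq : w.1 ≠ q.1 := h
  calc f x ≤ lineY w q x :=
        hsee q hp rfl _ (by rw [segment_eq_image_lineY hq]; exact ⟨x, hx, rfl⟩)
    _ ≤ lineY w p x := lineY_le_lineY_of_mem_uIcc hx (by rw [lineY_left, lineY_left])
        (by rw [show p.1 = q.1 from rfl, lineY_right hq, lineY_right h]; exact hpf)

lemma le_of_mem_segment_of_fst_eq {g : ℝ → ℝ} {w p r : ℝ × ℝ} (h : w.1 = p.1)
    (hw : g w.1 ≤ w.2) (hp : g w.1 ≤ p.2) (hr : r ∈ segment ℝ w p) : g r.1 ≤ r.2 := by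
  obtain ⟨hr1, hr2⟩ := Prod.segment_subset w p hr
  rw [← h, segment_same, mem_singleton_iff] at hr1
  rw [segment_eq_uIcc] at hr2
  rw [hr1]
  exact (le_min hw hp).trans hr2.1

/-- Raising the base vertex of a discrete watchtower: let `f` be the piecewise-linear
terrain with vertices `v 0, …, v (n-1)`, let `w` be vertically above the vertex `v i`
and see all of the terrain, and let `f'` be the terrain obtained by raising `v i` to
`ti` (same `x`-coordinate, `y`-coordinate at least that of `v i`, with `w` on or above
`ti` and all other vertices unchanged).  Then `w` sees all of the new terrain, so the
vertical segment from `ti` to `w` is a watchtower for it. -/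
theorem stmt9 (n : ℕ) (hn : 2 ≤ n) (v v' : ℕ → ℝ × ℝ) (f f' : ℝ → ℝ)
    (i : ℕ) (hi : i < n) (ti w : ℝ × ℝ)
    (hmono : ∀ k, k + 1 < n → (v k).1 < (v (k + 1)).1)
    (hf : ∀ k, k + 1 < n → ∀ x ∈ Set.Icc (v k).1 (v (k + 1)).1,
      f x = lineY (v k) (v (k + 1)) x)
    (htix : ti.1 = (v i).1) (htiy : (v i).2 ≤ ti.2)
    (hv'i : v' i = ti) (hv' : ∀ k, k ≠ i → v' k = v k)
    (hf' : ∀ k, k + 1 < n → ∀ x ∈ Set.Icc (v' k).1 (v' (k + 1)).1,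
      f' x = lineY (v' k) (v' (k + 1)) x)
    (hwx : w.1 = (v i).1) (hwy : ti.2 ≤ w.2)
    (hsee : ∀ p : ℝ × ℝ, p.1 ∈ Set.Icc (v 0).1 (v (n - 1)).1 → p.2 = f p.1 →
      ∀ r ∈ segment ℝ w p, f r.1 ≤ r.2) :
    ∀ p : ℝ × ℝ, p.1 ∈ Set.Icc (v' 0).1 (v' (n - 1)).1 → p.2 = f' p.1 →
      ∀ r ∈ segment ℝ w p, f' r.1 ≤ r.2 := by
  have hT : IsTerrain n v f := ⟨hmono, hf⟩
  have hraise : ∀ k, (v' k).1 = (v k).1 ∧ (v k).2 ≤ (v' k).2 := fun k => by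
    rcases eq_or_ne k i with rfl | hk
    · rw [hv'i]
      exact ⟨htix, htiy⟩
    · rw [hv' k hk]
      exact ⟨rfl, le_rfl⟩
  have hfst k := (hraise k).1
  have hT' : IsTerrain n v' f' := ⟨fun k hk => by simpa only [hfst] using hmono k hk, hf'⟩
  have hw : f' w.1 = ti.2 := by rw [hwx, ← htix, ← hv'i, hT'.apply_fst hn hi]
  rw [hfst, hfst]
  intro p hp hpf r hr
  by_cases hwp : w.1 = p.1
  · exact le_of_mem_segment_of_fst_eq hwp (hw ▸ hwy) (by rw [hpf, hwp]) hr
  rw [segment_eq_image_lineY hwp] at hr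
  obtain ⟨x, hx, rfl⟩ := hr
  have hwline : f' w.1 ≤ lineY w p w.1 := by rw [hw, lineY_left]; exact hwy
  have hfp : f p.1 ≤ p.2 := hpf ▸ hT.le_of_snd_le hT' hn hfst (fun k => (hraise k).2) hp
  refine hT'.le_lineY_of_le_at_breakpoints hn (by rw [hfst, hfst, hwx]; exact hT.fst_mem_Icc hi)
    (by rwa [hfst, hfst]) ?_ hx
  rintro e he (rfl | rfl | ⟨j, hj, rfl⟩)
  · exact hwline
  · rw [lineY_right hwp, hpf]
  rcases eq_or_ne j i with rfl | hji
  · rw [hfst, ← hwx]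
    exact hwline
  rw [hT'.apply_fst hn hj, hv' j hji, ← hT.apply_fst hn hj]
  exact le_lineY_of_sees hsee hp hfp hwp (hv' j hji ▸ he)
end
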